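/- Let (𝒳, d) be a metric space, and let S̃ = S̃₊ ∪ S̃₋ be a finite labeled set of points with margin marg(S̃) = d(S̃₊, S̃₋) ≥ γ > 0, where both S̃₊ and S̃₋ are nonempty. Then there exists a 2-Lipschitz function f : 𝒳 → ℝ with f(x) = γ for all x ∈ S̃₊ and f(x) = −γ for all x ∈ S̃₋, such that for every x ∈ 𝒳 the nearest-neighbor classifier h_{S̃}(x) = sign(d(x, S̃₋) − d(x, S̃₊)) equals sign(f(x)) whenever d(x,S̃₊) ≠ d(x,S̃₋). (One may take f(x) = γ·(d(x,S̃₋) − d(x,S̃₊))/γ clipped appropriately; the diameter of 𝒳 is assumed at most 1.) -/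

import Mathlib

/-!
Take the signed distance `g x = d(x, S̃₋) - d(x, S̃₊)`: it is a difference of two 1-Lipschitz
functions, so 2-Lipschitz, and its sign is the 1-NN label. On `S̃₊` it is at least the margin `γ`,
on `S̃₋` at most `-γ`, so clipping it to `[-γ, γ]` gives the required values on the sample
without changing its Lipschitz constant or its sign.
-/

open Metric

lemma lipschitzWith_infDist_sub_infDist {α : Type*} [PseudoMetricSpace α] (s t : Set α) :
    LipschitzWith 2 fun x => infDist x s - infDist x t := by
  simpa [one_add_one_eq_two] using (lipschitz_infDist_pt s).sub (lipschitz_infDist_pt t)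

lemma Real.sign_max_neg_min {γ : ℝ} (hγ : 0 < γ) (a : ℝ) :
    Real.sign (max (-γ) (min γ a)) = Real.sign a := by
  rcases lt_trichotomy a 0 with ha | rfl | ha
  · rw [Real.sign_of_neg ha, Real.sign_of_neg (max_lt (by linarith) (min_lt_of_right_lt ha))]
  · simp [hγ.le]
  · rw [Real.sign_of_pos ha, Real.sign_of_pos (lt_max_of_lt_right (lt_min hγ ha))]

lemma infDist_sub_infDist_ge_of_mem {α : Type*} [PseudoMetricSpace α] {s t : Set α} {x : α}
    {γ : ℝ} (hx : x ∈ t) (hs : s.Nonempty) (hγ : ∀ y ∈ s, γ ≤ dist x y) :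
    γ ≤ infDist x s - infDist x t := by
  rw [infDist_zero_of_mem hx, sub_zero]
  exact (le_infDist hs).2 hγ

theorem lipschitz_extension_of_separated_sample_general
    {𝒳 : Type*} [MetricSpace 𝒳]
    (P N : Finset 𝒳) (hP : P.Nonempty) (hN : N.Nonempty)
    (γ : ℝ) (hγ : 0 < γ)
    (hmarg : ∀ p ∈ P, ∀ q ∈ N, γ ≤ dist p q) :
    ∃ f : 𝒳 → ℝ,
      (∀ x y : 𝒳, |f x - f y| ≤ 2 * dist x y) ∧
      (∀ x ∈ P, f x = γ) ∧ (∀ x ∈ N, f x = -γ) ∧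
      (∀ x : 𝒳, infDist x (↑N : Set 𝒳) ≠ infDist x (↑P : Set 𝒳) →
        Real.sign (infDist x (↑N : Set 𝒳) - infDist x (↑P : Set 𝒳)) = Real.sign (f x)) := by
  set g : 𝒳 → ℝ := fun x => infDist x (↑N : Set 𝒳) - infDist x (↑P : Set 𝒳)
  have hlip : LipschitzWith 2 fun x => max (-γ) (min γ (g x)) :=
    ((lipschitzWith_infDist_sub_infDist _ _).const_min γ).const_max (-γ)
  refine ⟨fun x => max (-γ) (min γ (g x)), fun x y => ?_, fun x hx => ?_, fun x hx => ?_,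
    fun x _ => (Real.sign_max_neg_min hγ (g x)).symm⟩
  · simpa [← Real.dist_eq] using hlip.dist_le_mul x y
  · have : γ ≤ g x := infDist_sub_infDist_ge_of_mem (Finset.mem_coe.2 hx)
      (Finset.coe_nonempty.2 hN) fun q hq => hmarg x hx q hq
    simp [min_eq_left this, hγ.le]
  · have : γ ≤ -g x := by
      simpa [g] using infDist_sub_infDist_ge_of_mem (Finset.mem_coe.2 hx)
        (Finset.coe_nonempty.2 hP) fun p hp => (dist_comm x p).symm ▸ hmarg p hp x hx
    simp [min_eq_right (by linarith : g x ≤ γ), show g x ≤ -γ by linarith]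

theorem lipschitz_extension_of_separated_sample
    {𝒳 : Type*} [MetricSpace 𝒳]
    (hdiam : ∀ x y : 𝒳, dist x y ≤ 1)
    (P N : Finset 𝒳) (hP : P.Nonempty) (hN : N.Nonempty)
    (γ : ℝ) (hγ : 0 < γ)
    (hmarg : ∀ p ∈ P, ∀ q ∈ N, γ ≤ dist p q) :
    ∃ f : 𝒳 → ℝ,
      (∀ x y : 𝒳, |f x - f y| ≤ 2 * dist x y) ∧
      (∀ x ∈ P, f x = γ) ∧ (∀ x ∈ N, f x = -γ) ∧
      (∀ x : 𝒳, infDist x (↑N : Set 𝒳) ≠ infDist x (↑P : Set 𝒳) →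
        Real.sign (infDist x (↑N : Set 𝒳) - infDist x (↑P : Set 𝒳)) = Real.sign (f x)) :=
  lipschitz_extension_of_separated_sample_general P N hP hN γ hγ hmarg
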